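/- arXiv:1904.07102 — 3 statements merged into one kernel-verified Lean document; each statement's English description precedes it below -/
import Mathlib

section
/- Let K be a field, A, B ∈ M_m(K) and A', B' ∈ M_{m'}(K), and suppose the characteristic polynomials of A·B and A'·B' are coprime in K[λ]. Then the K-linear map on pairs of m×m' matrices sending (C, D) to (A·D − C·A', B·C − D·B') is a linear isomorphism of M_{m×m'}(K) ⊕ M_{m×m'}(K) onto itself. -/
/-!
From `A * D = C * A'` and `B * C = D * B'` one gets the two Sylvester equations
`(A * B) * C = C * (A' * B')` and `(B * A) * D = D * (B' * A')`. Since `B * A` and `A * B` have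
the same characteristic polynomial, in both equations the two sides have coprime characteristic
polynomials, which forces `C = 0` and `D = 0`. An injective endomorphism of a finite-dimensional
space is an isomorphism.
-/

open Polynomial

namespace Matrix

variable {R : Type*} [CommRing R] {m n : Type*} [Fintype m] [Fintype n]

section SylvesterMap

variable (A B : Matrix m m R) (A' B' : Matrix n n R)

def sylvesterPairMap : (Matrix m n R × Matrix m n R) →ₗ[R] (Matrix m n R × Matrix m n R) where
  toFun p := (A * p.2 - p.1 * A', B * p.1 - p.2 * B')
  map_add' p q := by
    simp only [Prod.fst_add, Prod.snd_add, Matrix.mul_add, Matrix.add_mul, Prod.mk_add_mk,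
      Prod.mk.injEq]
    constructor <;> abel
  map_smul' c p := by simp [smul_sub]

theorem sylvesterPairMap_apply (C D : Matrix m n R) :
    sylvesterPairMap A B A' B' (C, D) = (A * D - C * A', B * C - D * B') :=
  rfl

end SylvesterMap

variable [DecidableEq m] [DecidableEq n]

theorem aeval_mul_eq_mul_aeval_of_mul_eq_mul {X : Matrix m m R} {Y : Matrix n n R}
    {C : Matrix m n R} (h : X * C = C * Y) (p : R[X]) :
    aeval X p * C = C * aeval Y p := by
  induction p using Polynomial.induction_on with
  | C a => simp [Algebra.algebraMap_eq_smul_one]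
  | add p q hp hq => simp [Matrix.add_mul, Matrix.mul_add, hp, hq]
  | monomial k a hp =>
    simp only [pow_succ, ← Matrix.mul_assoc, map_mul, aeval_X] at hp ⊢
    rw [Matrix.mul_assoc _ X C, h, ← Matrix.mul_assoc, hp, Matrix.mul_assoc]

theorem eq_zero_of_mul_eq_mul_of_isCoprime_charpoly {X : Matrix m m R} {Y : Matrix n n R}
    (hXY : IsCoprime X.charpoly Y.charpoly) {C : Matrix m n R} (h : X * C = C * Y) :
    C = 0 := by
  obtain ⟨u, v, huv⟩ := hXY
  -- `χ_X(Y)` is invertible, with inverse `u(Y)`, while `C * χ_X(Y) = χ_X(X) * C = 0`.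
  have hinv : aeval Y (X.charpoly * u) = 1 := by
    rw [mul_comm]
    simpa [aeval_self_charpoly] using congrArg (aeval Y) huv
  have hkill : C * aeval Y X.charpoly = 0 := by
    rw [← aeval_mul_eq_mul_aeval_of_mul_eq_mul h, aeval_self_charpoly, Matrix.zero_mul]
  calc C = C * aeval Y X.charpoly * aeval Y u := by
        rw [Matrix.mul_assoc, ← map_mul, hinv, Matrix.mul_one]
    _ = 0 := by rw [hkill, Matrix.zero_mul]

theorem sylvesterPairMap_injective {A B : Matrix m m R} {A' B' : Matrix n n R}
    (hcop : IsCoprime (A * B).charpoly (A' * B').charpoly) :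
    Function.Injective (sylvesterPairMap A B A' B') := by
  rw [← LinearMap.ker_eq_bot, LinearMap.ker_eq_bot']
  rintro ⟨C, D⟩ hCD
  obtain ⟨hAD, hBC⟩ : A * D = C * A' ∧ B * C = D * B' := by
    simpa [sylvesterPairMap_apply, sub_eq_zero] using hCD
  have hC : (A * B) * C = C * (A' * B') := by
    rw [Matrix.mul_assoc, hBC, ← Matrix.mul_assoc, hAD, Matrix.mul_assoc]
  have hD : (B * A) * D = D * (B' * A') := by
    rw [Matrix.mul_assoc, hAD, ← Matrix.mul_assoc, hBC, Matrix.mul_assoc]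
  have hcop' : IsCoprime (B * A).charpoly (B' * A').charpoly := by
    rwa [charpoly_mul_comm B, charpoly_mul_comm B']
  rw [eq_zero_of_mul_eq_mul_of_isCoprime_charpoly hcop hC,
    eq_zero_of_mul_eq_mul_of_isCoprime_charpoly hcop' hD, Prod.mk_zero_zero]

end Matrix

theorem sylvester_pair_equiv (K : Type*) [Field K] (m m' : ℕ)
    (A B : Matrix (Fin m) (Fin m) K) (A' B' : Matrix (Fin m') (Fin m') K)
    (hcop : IsCoprime (A * B).charpoly (A' * B').charpoly) :
    ∃ e : (Matrix (Fin m) (Fin m') K × Matrix (Fin m) (Fin m') K) ≃ₗ[K]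
          (Matrix (Fin m) (Fin m') K × Matrix (Fin m) (Fin m') K),
      ∀ C D : Matrix (Fin m) (Fin m') K,
        e (C, D) = (A * D - C * A', B * C - D * B') :=
  ⟨.ofInjectiveEndo _ (Matrix.sylvesterPairMap_injective hcop),
    Matrix.sylvesterPairMap_apply A B A' B'⟩
end

section
/- Let t₀ < 0 be a real number, and let u₁, …, u_p and v₁, …, v_q be real sequences satisfying u_i − u_{i+1} > t₀ for 1 ≤ i ≤ p−1 and v_i − v_{i+1} > t₀ for 1 ≤ i ≤ q−1. Then there exists a merged sequence w₁, …, w_{p+q}, obtained by interleaving the two sequences (i.e., there are strictly increasing injections φ : {1,…,p} → {1,…,p+q} and ψ : {1,…,q} → {1,…,p+q} with disjoint images covering {1,…,p+q}, and w_{φ(i)} = u_i, w_{ψ(j)} = v_j), such that w_k − w_{k+1} > t₀ for all 1 ≤ k ≤ p+q−1. -/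
/-!
Order the disjoint union of the two index sets by decreasing prefix minimum
`m(i) = min_{k ≤ i} u_k`, breaking ties by index within a sequence and putting `u` before `v`
across the two. On each sequence this is the index order, so two neighbours from the same
sequence are consecutive there and satisfy the hypothesis. If `x` is followed by `y` from the
other sequence, then `y` equals its own prefix minimum: otherwise some earlier `z` of `y`'s
sequence has `m(z) = m(y)`, so `z < x < y` all share their prefix minimum, and the tie-break, which
keeps each sequence in one block, cannot put `x` between `z` and `y`. Hence
`y = m(y) ≤ m(x) ≤ x`, and `x - y ≥ 0 > t₀`.
-/

open Function OrderDual

variable {ι κ R : Type*}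

section PrefixMin

variable [LinearOrder ι] [LocallyFiniteOrderBot ι] [LinearOrder R] (u : ι → R)

def prefixMin (i : ι) : R := (Finset.Iic i).inf' Finset.nonempty_Iic u

theorem prefixMin_le (i : ι) : prefixMin u i ≤ u i :=
  Finset.inf'_le u (Finset.mem_Iic.2 le_rfl)

theorem prefixMin_antitone : Antitone (prefixMin u) := fun _ _ hij =>
  Finset.inf'_mono u (Finset.Iic_subset_Iic.2 hij) Finset.nonempty_Iic

theorem prefixMin_eq_or_exists_lt (i : ι) :
    prefixMin u i = u i ∨ ∃ j < i, prefixMin u j = prefixMin u i := by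
  obtain ⟨k, hk, hik⟩ := Finset.exists_mem_eq_inf' (Finset.nonempty_Iic (a := i)) u
  rcases (Finset.mem_Iic.1 hk).lt_or_eq with hki | rfl
  · refine Or.inr ⟨k, hki, le_antisymm ?_ (prefixMin_antitone u hki.le)⟩
    exact (prefixMin_le u k).trans_eq hik.symm
  · exact Or.inl hik

end PrefixMin

theorem Sum.Lex.isLeft_eq_of_lt_of_lt [LT ι] [LT κ] {a b c : ι ⊕ κ} (hab : toLex a < toLex b)
    (hbc : toLex b < toLex c) (hac : a.isLeft = c.isLeft) : b.isLeft = a.isLeft := by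
  cases a <;> cases b <;> cases c <;> simp_all

/-- A copy of `ι ⊕ κ`, which will carry the merge order determined by `u` and `v`. -/
def Merge (_u : ι → R) (_v : κ → R) : Type _ := ι ⊕ κ

namespace Merge

variable {u : ι → R} {v : κ → R}

def inl : ι → Merge u v := Sum.inl

def inr : κ → Merge u v := Sum.inr

def val : Merge u v → R := Sum.elim u v

instance [Fintype ι] [Fintype κ] : Fintype (Merge u v) := inferInstanceAs (Fintype (ι ⊕ κ))

theorem card_eq [Fintype ι] [Fintype κ] :
    Fintype.card (Merge u v) = Fintype.card ι + Fintype.card κ :=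
  Fintype.card_sum

variable [LinearOrder ι] [LocallyFiniteOrderBot ι] [LinearOrder κ] [LocallyFiniteOrderBot κ]
  [LinearOrder R]

def prefixMin : Merge u v → R := Sum.elim (_root_.prefixMin u) (_root_.prefixMin v)

def key (x : Merge u v) : Rᵒᵈ ×ₗ (ι ⊕ₗ κ) := toLex (toDual x.prefixMin, toLex x)

theorem key_injective : Injective (key : Merge u v → _) := fun _ _ h =>
  toLex.injective (congrArg (fun z => (ofLex z).2) h)

instance : LinearOrder (Merge u v) := LinearOrder.lift' key key_injective

theorem prefixMin_le_of_lt {x y : Merge u v} (h : x < y) : y.prefixMin ≤ x.prefixMin :=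
  Prod.Lex.monotone_fst _ _ h.le

theorem inl_strictMono : StrictMono (inl : ι → Merge u v) := fun _ _ h =>
  Prod.Lex.toLex_strictMono <| Prod.mk_lt_mk_of_le_of_lt
    (toDual_le_toDual.2 (prefixMin_antitone u h.le)) (Sum.Lex.inl_lt_inl_iff.2 h)

theorem inr_strictMono : StrictMono (inr : κ → Merge u v) := fun _ _ h =>
  Prod.Lex.toLex_strictMono <| Prod.mk_lt_mk_of_le_of_lt
    (toDual_le_toDual.2 (prefixMin_antitone v h.le)) (Sum.Lex.inr_lt_inr_iff.2 h)

theorem prefixMin_eq_or_exists_lt (y : Merge u v) : y.prefixMin = y.val ∨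
    ∃ z < y, Sum.isLeft z = Sum.isLeft y ∧ z.prefixMin = y.prefixMin := by
  cases y with
  | inl i =>
    refine (_root_.prefixMin_eq_or_exists_lt u i).imp id ?_
    rintro ⟨j, hji, hj⟩
    exact ⟨inl j, inl_strictMono hji, rfl, hj⟩
  | inr i =>
    refine (_root_.prefixMin_eq_or_exists_lt v i).imp id ?_
    rintro ⟨j, hji, hj⟩
    exact ⟨inr j, inr_strictMono hji, rfl, hj⟩

theorem val_le_of_covBy {x y : Merge u v} (h : x ⋖ y) (hxy : Sum.isLeft x ≠ Sum.isLeft y) :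
    y.val ≤ x.val := by
  suffices hy : y.prefixMin = y.val by
    calc y.val = y.prefixMin := hy.symm
      _ ≤ x.prefixMin := prefixMin_le_of_lt h.lt
      _ ≤ x.val := by cases x <;> exact _root_.prefixMin_le _ _
  refine (prefixMin_eq_or_exists_lt y).resolve_right ?_
  rintro ⟨z, hzy, hside, hz⟩
  have hzx : z < x := (h.le_of_lt hzy).lt_of_ne (by rintro rfl; exact hxy hside)
  have hfst : z.prefixMin = x.prefixMin ∧ x.prefixMin = y.prefixMin :=
    ⟨le_antisymm (hz ▸ prefixMin_le_of_lt h.lt) (prefixMin_le_of_lt hzx),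
      le_antisymm (hz ▸ prefixMin_le_of_lt hzx) (prefixMin_le_of_lt h.lt)⟩
  have hzx' := (Prod.Lex.toLex_lt_toLex.1 hzx).resolve_left (by simp [hfst.1])
  have hxy' := (Prod.Lex.toLex_lt_toLex.1 h.lt).resolve_left (by simp [hfst.2])
  exact hxy ((Sum.Lex.isLeft_eq_of_lt_of_lt hzx'.2 hxy'.2 hside).trans hside)

theorem rel_val_of_covBy (r : R → R → Prop) (hr : ∀ a b, b ≤ a → r a b)
    (hu : ∀ i i', i ⋖ i' → r (u i) (u i')) (hv : ∀ j j', j ⋖ j' → r (v j) (v j'))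
    {x y : Merge u v} (h : x ⋖ y) : r x.val y.val := by
  cases x <;> cases y
  · exact hu _ _ (h.of_image (OrderEmbedding.ofStrictMono _ inl_strictMono))
  · exact hr _ _ (val_le_of_covBy h (by simp))
  · exact hr _ _ (val_le_of_covBy h (by simp))
  · exact hv _ _ (h.of_image (OrderEmbedding.ofStrictMono _ inr_strictMono))

end Merge

theorem Fin.rel_of_covBy {n : ℕ} {r : Fin n → Fin n → Prop}
    (h : ∀ (i : ℕ) (h : i + 1 < n), r ⟨i, Nat.lt_of_succ_lt h⟩ ⟨i + 1, h⟩) {i i' : Fin n}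
    (hii' : i ⋖ i') : r i i' := by
  obtain ⟨i, hi⟩ := i
  obtain ⟨i', hi'⟩ := i'
  obtain rfl : i + 1 = i' := Nat.covBy_iff_add_one_eq.1 (Fin.covBy_iff.1 hii')
  exact h i hi'

theorem siegel_merge (t₀ : ℝ) (ht : t₀ < 0) (p q : ℕ)
    (u : Fin p → ℝ) (v : Fin q → ℝ)
    (hu : ∀ (i : ℕ) (h : i + 1 < p), u ⟨i, Nat.lt_of_succ_lt h⟩ - u ⟨i + 1, h⟩ > t₀)
    (hv : ∀ (i : ℕ) (h : i + 1 < q), v ⟨i, Nat.lt_of_succ_lt h⟩ - v ⟨i + 1, h⟩ > t₀) :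
    ∃ (w : Fin (p + q) → ℝ) (φ : Fin p → Fin (p + q)) (ψ : Fin q → Fin (p + q)),
      StrictMono φ ∧ StrictMono ψ ∧
      Disjoint (Set.range φ) (Set.range ψ) ∧
      Set.range φ ∪ Set.range ψ = Set.univ ∧
      (∀ i, w (φ i) = u i) ∧ (∀ j, w (ψ j) = v j) ∧
      ∀ (k : ℕ) (h : k + 1 < p + q),
        w ⟨k, Nat.lt_of_succ_lt h⟩ - w ⟨k + 1, h⟩ > t₀ := by
  let e : Fin (p + q) ≃o Merge u v :=
    Fintype.orderIsoFinOfCardEq _ (by simp [Merge.card_eq])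
  have hcompl : IsCompl (Set.range (e.symm ∘ Merge.inl)) (Set.range (e.symm ∘ Merge.inr)) := by
    rw [Set.range_comp, Set.range_comp]
    exact e.symm.toEquiv.toOrderIsoSet.isCompl_iff.1 Set.isCompl_range_inl_range_inr
  refine ⟨fun k => (e k).val, e.symm ∘ Merge.inl, e.symm ∘ Merge.inr,
    e.symm.strictMono.comp Merge.inl_strictMono, e.symm.strictMono.comp Merge.inr_strictMono,
    hcompl.disjoint, hcompl.sup_eq_top, fun i => congrArg Merge.val (e.apply_symm_apply (Merge.inl i)),
    fun j => congrArg Merge.val (e.apply_symm_apply (Merge.inr j)), fun k hk => ?_⟩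
  refine Merge.rel_val_of_covBy (fun a b => a - b > t₀) (fun a b hab => by linarith)
    (fun i i' => Fin.rel_of_covBy (r := fun i i' => u i - u i' > t₀) hu)
    (fun j j' => Fin.rel_of_covBy (r := fun j j' => v j - v j' > t₀) hv) ?_
  exact (apply_covBy_apply_iff e).2 (Fin.covBy_iff.2 (Nat.covBy_iff_add_one_eq.2 rfl))
end

section
/- Let K be an algebraically closed field, p ≤ q, A a p×q matrix and B a q×p matrix over K. If the p×p matrix A·B has p distinct nonzero eigenvalues, then the (p+q)×(p+q) block matrix X = [[0, A],[B, 0]] is diagonalizable over K. -/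
/-!
Squaring the block matrix `X = [[0, A], [B, 0]]` gives `diag(AB, BA)`. Cayley–Hamilton for `AB`,
together with `A χ(BA) = χ(AB) A` for `χ = charpoly (AB)`, shows that `X χ(X²) = 0`. Since
`χ = ∏ (λ - μᵢ)`, the matrix `X` is annihilated by `λ ∏ (λ² - μᵢ)`, which is separable because the
`μᵢ` are distinct and nonzero and `2 ≠ 0`. So `X` is semisimple, hence diagonalizable over the
algebraically closed field `K`.
-/

open Polynomial Matrix Module

section

variable {R : Type*} [CommRing R] {m n : Type*} [Fintype m] [Fintype n] [DecidableEq m]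
  [DecidableEq n]

lemma Matrix.mul_aeval_mul_comm (M : Matrix m n R) (N : Matrix n m R) (g : R[X]) :
    M * aeval (N * M) g = aeval (M * N) g * M := by
  induction g using Polynomial.induction_on' with
  | add f g hf hg => rw [map_add, map_add, Matrix.mul_add, Matrix.add_mul, hf, hg]
  | monomial k a =>
    have hpow : M * (N * M) ^ k = (M * N) ^ k * M := by
      induction k with
      | zero => simp
      | succ k ih => rw [pow_succ, pow_succ, ← Matrix.mul_assoc, ih, Matrix.mul_assoc,
          Matrix.mul_assoc, Matrix.mul_assoc]
    simp only [aeval_monomial, ← Algebra.smul_def, Matrix.mul_smul, Matrix.smul_mul, hpow]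

lemma Matrix.aeval_fromBlocks_diagonal (C : Matrix m m R) (D : Matrix n n R) (g : R[X]) :
    aeval (fromBlocks C 0 0 D) g = fromBlocks (aeval C g) 0 0 (aeval D g) := by
  induction g using Polynomial.induction_on' with
  | add f g hf hg => simp only [map_add, hf, hg, fromBlocks_add, add_zero]
  | monomial k a =>
    simp only [aeval_monomial, ← Algebra.smul_def, fromBlocks_diagonal_pow, fromBlocks_smul,
      smul_zero]

lemma Matrix.fromBlocks_offDiagonal_sq (A : Matrix m n R) (B : Matrix n m R) :
    fromBlocks 0 A B 0 ^ 2 = fromBlocks (A * B) 0 0 (B * A) := by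
  simp [sq, fromBlocks_multiply]

lemma Matrix.aeval_fromBlocks_offDiagonal_X_mul_charpoly_comp (A : Matrix m n R)
    (B : Matrix n m R) :
    aeval (fromBlocks 0 A B 0) (X * (A * B).charpoly.comp (X ^ 2)) = 0 := by
  rw [map_mul, aeval_comp, aeval_X, map_pow, aeval_X, fromBlocks_offDiagonal_sq,
    aeval_fromBlocks_diagonal, aeval_self_charpoly, fromBlocks_multiply, mul_aeval_mul_comm,
    aeval_self_charpoly]
  simp

lemma LinearMap.toMatrix_eq_diagonal {V ι : Type*} [AddCommGroup V] [Module R V] [Fintype ι]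
    [DecidableEq ι] {f : End R V} {v : Basis ι R V} {d : ι → R}
    (hv : ∀ i, f (v i) = d i • v i) : LinearMap.toMatrix v v f = diagonal d := by
  ext i j
  rcases eq_or_ne i j with rfl | hij
  · simp [LinearMap.toMatrix_apply, hv]
  · simp [LinearMap.toMatrix_apply, hv, hij]

end

section

variable {K : Type*} [Field K]

lemma isCoprime_X_sq_sub_C {a b : K} (h : a ≠ b) : IsCoprime (X ^ 2 - C a) (X ^ 2 - C b) := by
  simpa using
    (isCoprime_X_sub_C_of_isUnit_sub (sub_ne_zero.2 h).isUnit).map (compRingHom (X ^ 2 : K[X]))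

lemma separable_X_mul_prod_X_sq_sub_C {ι : Type*} [Fintype ι] (h2 : (2 : K) ≠ 0) {μ : ι → K}
    (hinj : Function.Injective μ) (h0 : ∀ i, μ i ≠ 0) :
    (X * ∏ i, (X ^ 2 - C (μ i))).Separable := by
  refine separable_X.mul (separable_prod (fun i j hij => isCoprime_X_sq_sub_C (hinj.ne hij))
    fun i => separable_X_pow_sub_C _ (by exact_mod_cast h2) (h0 i)) ?_
  refine IsCoprime.prod_right fun i _ => ?_
  simpa [IsCoprime.pow_left_iff] using isCoprime_X_sq_sub_C (h0 i).symm

variable {n : Type*} [Fintype n] [DecidableEq n]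

lemma Module.End.exists_basis_eigenvectors_of_isSemisimple [IsAlgClosed K] {V ι : Type*}
    [AddCommGroup V] [Module K V] [Finite ι] {f : End K V} (hf : f.IsSemisimple)
    (b : Basis ι K V) : ∃ (v : Basis ι K V) (d : ι → K), ∀ i, f (v i) = d i • v i := by
  classical
  have : FiniteDimensional K V := b.finiteDimensional_of_finite
  have hsum := DirectSum.isInternal_submodule_of_iSupIndep_of_iSup_eq_top
    f.eigenspaces_iSupIndep hf.iSup_eigenspace_eq_top
  let w := hsum.collectedBasis fun μ ↦ finBasis K (f.eigenspace μ)
  refine ⟨w.reindex (w.indexEquiv b), fun i ↦ ((w.indexEquiv b).symm i).1, fun i ↦ ?_⟩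
  simpa [w] using End.mem_eigenspace_iff.mp
    (hsum.collectedBasis_mem (fun μ ↦ finBasis K (f.eigenspace μ)) ((w.indexEquiv b).symm i))

lemma Matrix.exists_isUnit_isDiag_of_isSemisimple [IsAlgClosed K] {X : Matrix n n K}
    (hX : End.IsSemisimple (toLin' X)) :
    ∃ P : Matrix n n K, IsUnit P ∧ (P⁻¹ * X * P).IsDiag := by
  obtain ⟨v, d, hv⟩ := End.exists_basis_eigenvectors_of_isSemisimple hX (Pi.basisFun K n)
  let P := (Pi.basisFun K n).toMatrix v
  have := (Pi.basisFun K n).invertibleToMatrix v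
  refine ⟨P, isUnit_of_invertible P, ?_⟩
  rw [inv_eq_left_inv (v.toMatrix_mul_toMatrix_flip _), ← LinearMap.toMatrix'_toLin' X,
    ← LinearMap.toMatrix_eq_toMatrix', basis_toMatrix_mul_linearMap_toMatrix_mul_basis_toMatrix,
    LinearMap.toMatrix_eq_diagonal hv]
  exact isDiag_diagonal d

lemma Matrix.isSemisimple_toLin'_of_squarefree_aeval_eq_zero {X : Matrix n n K} {g : K[X]}
    (hg : Squarefree g) (hX : aeval X g = 0) : End.IsSemisimple (toLin' X) := by
  refine End.isSemisimple_of_squarefree_aeval_eq_zero hg ?_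
  change aeval (toLinAlgEquiv' X) g = 0
  rw [aeval_algEquiv, AlgHom.comp_apply, hX, map_zero]

end

theorem block_diagonalizable_of_distinct_eigenvalues_general (K : Type*) [Field K] [IsAlgClosed K]
    (h2 : (2 : K) ≠ 0) (p q : ℕ)
    (A : Matrix (Fin p) (Fin q) K) (B : Matrix (Fin q) (Fin p) K)
    (μ : Fin p → K) (hinj : Function.Injective μ) (h0 : ∀ i, μ i ≠ 0)
    (hcp : (A * B).charpoly = ∏ i, (Polynomial.X - Polynomial.C (μ i))) :
    ∃ P : Matrix (Fin p ⊕ Fin q) (Fin p ⊕ Fin q) K, IsUnit P ∧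
      (P⁻¹ * (Matrix.fromBlocks 0 A B 0) * P).IsDiag := by
  have hm : X * ∏ i, (X ^ 2 - C (μ i)) = X * (A * B).charpoly.comp (X ^ 2) := by
    simp [hcp, prod_comp, sub_comp]
  refine exists_isUnit_isDiag_of_isSemisimple (isSemisimple_toLin'_of_squarefree_aeval_eq_zero
    (separable_X_mul_prod_X_sq_sub_C h2 hinj h0).squarefree ?_)
  rw [hm, aeval_fromBlocks_offDiagonal_X_mul_charpoly_comp]

theorem block_diagonalizable_of_distinct_eigenvalues (K : Type*) [Field K] [IsAlgClosed K]
    (h2 : (2 : K) ≠ 0) (p q : ℕ) (hpq : p ≤ q)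
    (A : Matrix (Fin p) (Fin q) K) (B : Matrix (Fin q) (Fin p) K)
    (μ : Fin p → K) (hinj : Function.Injective μ) (h0 : ∀ i, μ i ≠ 0)
    (hcp : (A * B).charpoly = ∏ i, (Polynomial.X - Polynomial.C (μ i))) :
    ∃ P : Matrix (Fin p ⊕ Fin q) (Fin p ⊕ Fin q) K, IsUnit P ∧
      (P⁻¹ * (Matrix.fromBlocks 0 A B 0) * P).IsDiag :=
  block_diagonalizable_of_distinct_eigenvalues_general K h2 p q A B μ hinj h0 hcp
end
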